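/- Let 𝒳 = span{X_1, …, X_k} ⊂ 𝔽^{n×n} (𝔽 = ℝ or ℂ) be a k-dimensional subspace and let X_* ∈ 𝒳 be a spectral approximation of Y ∈ 𝔽^{n×n} \ 𝒳. Define A_i = (Y − X_*)ᴴ X_i for i = 1, …, k, A_Y = (Y − X_*)ᴴ Y, and ϱ = ‖Y − X_*‖₂². Then equality max_{‖v‖₂=1} min_{X∈𝒳} ‖(Y − X)v‖₂ = min_{X∈𝒳} ‖Y − X‖₂ holds if and only if ϱ·e_1 belongs to 𝓕(A_Y, A_1, …, A_k), where e_1 is the first standard basis vector of 𝔽^{k+1}. -/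

import Mathlib

/-!
Write `R = Y - X_*` and `ρ = ‖R‖₂`. For a unit vector `v`, the inner minimum
`min_{X ∈ 𝒳} ‖(Y - X) v‖` is the distance from `Y v` to the subspace `{X v : X ∈ 𝒳}`. It is at
most `‖R v‖ ≤ ρ`, and by the orthogonality characterisation of best approximations it equals `ρ`
exactly when `‖R v‖ = ρ` and `R v ⊥ X v` for all `X ∈ 𝒳`. Being an infimum of continuous
functions it is upper semicontinuous, so its supremum over the unit sphere is attained. Hence
max-min = min-max iff some unit `v` has `‖R v‖ = ρ` and `R v ⊥ 𝒳 v`; since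
`vᴴ A_Y v = ⟪R v, Y v⟫ = ‖R v‖² + ⟪R v, X_* v⟫` and `vᴴ A_i v = ⟪R v, X_i v⟫`, this says
precisely that `ρ² e₁ ∈ 𝓕(A_Y, A_1, …, A_k)`.
-/

open Matrix

variable {𝕜 : Type*} [RCLike 𝕜]

/-- The spectral norm (matrix 2-norm): the supremum of `‖A v‖₂` over unit Euclidean
norm vectors `v`. -/
noncomputable def specNorm {m : Type*} [Fintype m] [DecidableEq m]
    (A : Matrix m m 𝕜) : ℝ :=
  sSup {r : ℝ | ∃ v : EuclideanSpace 𝕜 m, ‖v‖ = 1 ∧ r = ‖Matrix.toEuclideanLin A v‖}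

/-- `Xs` is a spectral (best) approximation of `Y` from the subspace `𝒳`. -/
def IsSpectralApprox {m : Type*} [Fintype m] [DecidableEq m]
    (𝒳 : Submodule 𝕜 (Matrix m m 𝕜)) (Y Xs : Matrix m m 𝕜) : Prop :=
  Xs ∈ 𝒳 ∧ ∀ X ∈ 𝒳, specNorm (Y - Xs) ≤ specNorm (Y - X)

/-- The span of the maximal right singular vectors of `M`. -/
noncomputable def maxRSV {m : Type*} [Fintype m] [DecidableEq m]
    (M : Matrix m m 𝕜) : Submodule 𝕜 (EuclideanSpace 𝕜 m) :=
  Submodule.span 𝕜 {v : EuclideanSpace 𝕜 m | ‖v‖ = 1 ∧ ‖Matrix.toEuclideanLin M v‖ = specNorm M}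

/-- The `k`-dimensional field of the `k` matrices `A 0, …, A (k-1)` restricted to
the subspace `S`. -/
def kField {m : Type*} [Fintype m] [DecidableEq m] {k : ℕ}
    (A : Fin k → Matrix m m 𝕜) (S : Submodule 𝕜 (EuclideanSpace 𝕜 m)) : Set (Fin k → 𝕜) :=
  {w | ∃ v : EuclideanSpace 𝕜 m, v ∈ S ∧ ‖v‖ = 1 ∧
     w = fun i => (inner 𝕜 v (Matrix.toEuclideanLin (A i) v) : 𝕜)}

/-- min-max value -/
noncomputable def minMaxVal {m : Type*} [Fintype m] [DecidableEq m]
    (𝒳 : Submodule 𝕜 (Matrix m m 𝕜)) (Y : Matrix m m 𝕜) : ℝ :=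
  sInf {r : ℝ | ∃ X ∈ 𝒳, r = specNorm (Y - X)}

/-- max-min value -/
noncomputable def maxMinVal {m : Type*} [Fintype m] [DecidableEq m]
    (𝒳 : Submodule 𝕜 (Matrix m m 𝕜)) (Y : Matrix m m 𝕜) : ℝ :=
  sSup {r : ℝ | ∃ v : EuclideanSpace 𝕜 m, ‖v‖ = 1 ∧
    r = sInf {s : ℝ | ∃ X ∈ 𝒳, s = ‖Matrix.toEuclideanLin (Y - X) v‖}}

/-- dual norm of a linear functional w.r.t. the spectral norm -/
noncomputable def dualNorm {m : Type*} [Fintype m] [DecidableEq m]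
    (f : Matrix m m 𝕜 →ₗ[𝕜] 𝕜) : ℝ :=
  sSup {r : ℝ | ∃ A : Matrix m m 𝕜, specNorm A = 1 ∧ r = ‖f A‖}

/-- the rank one matrix `u vᴴ` -/
def outer {m : Type*} (u v : EuclideanSpace 𝕜 m) : Matrix m m 𝕜 :=
  Matrix.of fun i j => u i * star (v j)

/-- nuclear (Schatten 1) norm: the sum of the singular values -/
noncomputable def nuclearNorm {m : Type*} [Fintype m] [DecidableEq m]
    (F : Matrix m m 𝕜) : ℝ :=
  ∑ i, Real.sqrt ((Matrix.isHermitian_conjTranspose_mul_self F).eigenvalues i)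

lemma UpperSemicontinuousOn.sSup_image_eq_iff {α : Type*} [TopologicalSpace α] {f : α → ℝ}
    {s : Set α} {c : ℝ} (hf : UpperSemicontinuousOn f s) (hs : IsCompact s) (hne : s.Nonempty)
    (hle : ∀ x ∈ s, f x ≤ c) : sSup (f '' s) = c ↔ ∃ x ∈ s, f x = c := by
  obtain ⟨a, ha, hmax⟩ := hf.exists_isMaxOn hne hs
  have hsup : sSup (f '' s) = f a :=
    IsGreatest.csSup_eq ⟨Set.mem_image_of_mem f ha, by rintro _ ⟨x, hx, rfl⟩; exact hmax hx⟩
  rw [hsup]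
  exact ⟨fun h => ⟨a, ha, h⟩, fun ⟨x, hx, hfx⟩ => le_antisymm (hle a ha) (hfx ▸ hmax hx)⟩

lemma LinearMap.forall_mem_span_range_eq_zero_iff {R M N ι : Type*} [Semiring R]
    [AddCommMonoid M] [Module R M] [AddCommMonoid N] [Module R N] (f : M →ₗ[R] N) (x : ι → M) :
    (∀ y ∈ Submodule.span R (Set.range x), f y = 0) ↔ ∀ i, f (x i) = 0 :=
  ⟨fun h i => h _ (Submodule.subset_span ⟨i, rfl⟩), fun h _ hy =>
    (Submodule.span_le (p := LinearMap.ker f)).2 (Set.range_subset_iff.2 h) hy⟩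

section Matrices

variable {m : Type*} [Fintype m] [DecidableEq m]

lemma bddAbove_norm_toEuclideanLin_unit (A : Matrix m m 𝕜) :
    BddAbove {r : ℝ | ∃ v : EuclideanSpace 𝕜 m, ‖v‖ = 1 ∧ r = ‖toEuclideanLin A v‖} := by
  refine ⟨‖(toEuclideanLin A).toContinuousLinearMap‖, ?_⟩
  rintro r ⟨v, hv, rfl⟩
  simpa [hv] using (toEuclideanLin A).toContinuousLinearMap.le_opNorm v

lemma norm_toEuclideanLin_le_specNorm (A : Matrix m m 𝕜) {v : EuclideanSpace 𝕜 m}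
    (hv : ‖v‖ = 1) : ‖toEuclideanLin A v‖ ≤ specNorm A :=
  le_csSup (bddAbove_norm_toEuclideanLin_unit A) ⟨v, hv, rfl⟩

lemma specNorm_nonneg (A : Matrix m m 𝕜) : 0 ≤ specNorm A :=
  Real.sSup_nonneg (by rintro r ⟨v, -, rfl⟩; positivity)

lemma inner_toEuclideanLin_conjTranspose_mul (A B : Matrix m m 𝕜) (v : EuclideanSpace 𝕜 m) :
    inner 𝕜 v (toEuclideanLin (Aᴴ * B) v) = inner 𝕜 (toEuclideanLin A v) (toEuclideanLin B v) := by
  rw [toLpLin_mul_same, LinearMap.comp_apply, toEuclideanLin_conjTranspose_eq_adjoint,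
    LinearMap.adjoint_inner_right]

def toEuclideanLinApplyₗ (v : EuclideanSpace 𝕜 m) : Matrix m m 𝕜 →ₗ[𝕜] EuclideanSpace 𝕜 m :=
  (LinearMap.applyₗ v).comp toEuclideanLin.toLinearMap

lemma toEuclideanLinApplyₗ_apply (v : EuclideanSpace 𝕜 m) (X : Matrix m m 𝕜) :
    toEuclideanLinApplyₗ v X = toEuclideanLin X v := rfl

variable {𝒳 : Submodule 𝕜 (Matrix m m 𝕜)} {Y Xs : Matrix m m 𝕜}

lemma IsSpectralApprox.minMaxVal_eq (h : IsSpectralApprox 𝒳 Y Xs) :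
    minMaxVal 𝒳 Y = specNorm (Y - Xs) :=
  IsLeast.csInf_eq ⟨⟨Xs, h.1, rfl⟩, by rintro r ⟨X, hX, rfl⟩; exact h.2 X hX⟩

variable (𝒳 Y) in
noncomputable def minResidual (v : EuclideanSpace 𝕜 m) : ℝ :=
  ⨅ X : 𝒳, ‖toEuclideanLin (Y - (X : Matrix m m 𝕜)) v‖

variable (𝒳 Y) in
lemma maxMinVal_eq_sSup_image_minResidual :
    maxMinVal 𝒳 Y = sSup (minResidual 𝒳 Y '' Metric.sphere 0 1) := by
  have hsInf (v : EuclideanSpace 𝕜 m) :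
      sInf {s : ℝ | ∃ X ∈ 𝒳, s = ‖toEuclideanLin (Y - X) v‖} = minResidual 𝒳 Y v :=
    congrArg sInf (by ext s; simp [eq_comm])
  simp only [maxMinVal, hsInf]
  congr 1
  ext r
  simp [eq_comm]

lemma minResidual_le (v : EuclideanSpace 𝕜 m) {X : Matrix m m 𝕜} (hX : X ∈ 𝒳) :
    minResidual 𝒳 Y v ≤ ‖toEuclideanLin (Y - X) v‖ :=
  ciInf_le ⟨0, by rintro r ⟨X, rfl⟩; positivity⟩ (⟨X, hX⟩ : 𝒳)

variable (𝒳 Y) in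
lemma upperSemicontinuous_minResidual : UpperSemicontinuous (minResidual 𝒳 Y) :=
  upperSemicontinuous_ciInf (fun _ => ⟨0, by rintro r ⟨X, rfl⟩; positivity⟩)
    fun X => (toEuclideanLin (Y - (X : Matrix m m 𝕜))).continuous_of_finiteDimensional.norm
      |>.upperSemicontinuous

lemma minResidual_eq_norm_iff (hXs : Xs ∈ 𝒳) (w : EuclideanSpace 𝕜 m) :
    minResidual 𝒳 Y w = ‖toEuclideanLin (Y - Xs) w‖ ↔
      ∀ X ∈ 𝒳, inner 𝕜 (toEuclideanLin (Y - Xs) w) (toEuclideanLin X w) = 0 := by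
  set K := 𝒳.map (toEuclideanLinApplyₗ w)
  have hK : minResidual 𝒳 Y w = ⨅ z : K, ‖toEuclideanLin Y w - z‖ := by
    rw [← (LinearMap.submoduleMap_surjective _ 𝒳).iInf_comp]
    simp [minResidual, toEuclideanLinApplyₗ_apply]
  have hXsK : toEuclideanLinApplyₗ w Xs ∈ K := Submodule.mem_map_of_mem hXs
  rw [hK, eq_comm, map_sub, LinearMap.sub_apply, ← toEuclideanLinApplyₗ_apply w Xs,
    K.norm_eq_iInf_iff_inner_eq_zero hXsK]
  simp [K, toEuclideanLinApplyₗ_apply]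

lemma IsSpectralApprox.minResidual_eq_specNorm_iff (h : IsSpectralApprox 𝒳 Y Xs)
    {w : EuclideanSpace 𝕜 m} (hw : ‖w‖ = 1) :
    minResidual 𝒳 Y w = specNorm (Y - Xs) ↔
      ‖toEuclideanLin (Y - Xs) w‖ = specNorm (Y - Xs) ∧
        ∀ X ∈ 𝒳, inner 𝕜 (toEuclideanLin (Y - Xs) w) (toEuclideanLin X w) = 0 := by
  have hres := minResidual_le (Y := Y) w h.1
  have hnorm := norm_toEuclideanLin_le_specNorm (Y - Xs) hw
  rw [← minResidual_eq_norm_iff h.1]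
  constructor
  · intro heq
    constructor <;> linarith
  · rintro ⟨hnorm_eq, hres_eq⟩
    rw [hres_eq, hnorm_eq]

theorem IsSpectralApprox.maxMinVal_eq_minMaxVal_iff [Nonempty m] (h : IsSpectralApprox 𝒳 Y Xs) :
    maxMinVal 𝒳 Y = minMaxVal 𝒳 Y ↔ ∃ w : EuclideanSpace 𝕜 m, ‖w‖ = 1 ∧
      ‖toEuclideanLin (Y - Xs) w‖ = specNorm (Y - Xs) ∧
        ∀ X ∈ 𝒳, inner 𝕜 (toEuclideanLin (Y - Xs) w) (toEuclideanLin X w) = 0 := by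
  have hle (w) (hw : w ∈ Metric.sphere (0 : EuclideanSpace 𝕜 m) 1) :
      minResidual 𝒳 Y w ≤ specNorm (Y - Xs) :=
    (minResidual_le w h.1).trans
      (norm_toEuclideanLin_le_specNorm _ (mem_sphere_zero_iff_norm.1 hw))
  rw [maxMinVal_eq_sSup_image_minResidual, h.minMaxVal_eq,
    ((upperSemicontinuous_minResidual 𝒳 Y).upperSemicontinuousOn _).sSup_image_eq_iff
      (isCompact_sphere 0 1) (NormedSpace.sphere_nonempty.2 zero_le_one) hle]
  simp only [mem_sphere_zero_iff_norm]
  exact exists_congr fun w => and_congr_right h.minResidual_eq_specNorm_iff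

theorem mem_kField_cons_iff {k : ℕ} (X : Fin k → Matrix m m 𝕜)
    (hXs : Xs ∈ Submodule.span 𝕜 (Set.range X)) {ρ : ℝ} (hρ : 0 ≤ ρ) :
    (fun i : Fin (k + 1) => if i = 0 then ((ρ ^ 2 : ℝ) : 𝕜) else 0) ∈
        kField (Fin.cons ((Y - Xs)ᴴ * Y) (fun i => (Y - Xs)ᴴ * X i)) ⊤ ↔
      ∃ w : EuclideanSpace 𝕜 m, ‖w‖ = 1 ∧ ‖toEuclideanLin (Y - Xs) w‖ = ρ ∧
        ∀ X' ∈ Submodule.span 𝕜 (Set.range X),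
          inner 𝕜 (toEuclideanLin (Y - Xs) w) (toEuclideanLin X' w) = 0 := by
  simp only [kField, Submodule.mem_top, true_and, Set.mem_ofPred_eq]
  refine exists_congr fun w => and_congr_right fun _ => ?_
  set r := toEuclideanLin (Y - Xs) w
  have horth_iff :=
    ((innerₛₗ 𝕜 r).comp (toEuclideanLinApplyₗ w)).forall_mem_span_range_eq_zero_iff X
  simp only [LinearMap.comp_apply, innerₛₗ_apply_apply, toEuclideanLinApplyₗ_apply] at horth_iff
  rw [horth_iff, funext_iff, Fin.forall_fin_succ]
  simp only [Fin.cons_zero, Fin.cons_succ, inner_toEuclideanLin_conjTranspose_mul,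
    Fin.succ_ne_zero, if_true, if_false, @eq_comm 𝕜 0]
  refine and_congr_left fun horth => ?_
  have hYw : inner 𝕜 r (toEuclideanLin Y w) = ((‖r‖ ^ 2 : ℝ) : 𝕜) := by
    have hsplit : toEuclideanLin Y w = r + toEuclideanLin Xs w := by simp [r]
    rw [hsplit, inner_add_right, horth_iff.2 horth Xs hXs, add_zero,
      inner_self_eq_norm_sq_to_K, RCLike.ofReal_pow]
  rw [hYw, eq_comm, RCLike.ofReal_inj, sq_eq_sq₀ (norm_nonneg _) hρ]

end Matrices

theorem stmt13_general {n k : ℕ} (X : Fin k → Matrix (Fin n) (Fin n) 𝕜)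
    (Y Xs : Matrix (Fin n) (Fin n) 𝕜)
    (hY : Y ∉ Submodule.span 𝕜 (Set.range X))
    (happrox : IsSpectralApprox (Submodule.span 𝕜 (Set.range X)) Y Xs) :
    maxMinVal (Submodule.span 𝕜 (Set.range X)) Y
        = minMaxVal (Submodule.span 𝕜 (Set.range X)) Y ↔
      (fun i : Fin (k + 1) => if i = 0 then ((specNorm (Y - Xs) ^ 2 : ℝ) : 𝕜) else 0) ∈
        kField (Fin.cons ((Y - Xs)ᴴ * Y) (fun i => (Y - Xs)ᴴ * X i)) ⊤ := by
  have : Nonempty (Fin n) := by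
    by_contra hempty
    rw [not_nonempty_iff] at hempty
    exact hY (Subsingleton.elim Y 0 ▸ Submodule.zero_mem _)
  rw [happrox.maxMinVal_eq_minMaxVal_iff, mem_kField_cons_iff X happrox.1 (specNorm_nonneg _)]

theorem stmt13 {n k : ℕ} (X : Fin k → Matrix (Fin n) (Fin n) 𝕜)
    (hdim : Module.finrank 𝕜 (Submodule.span 𝕜 (Set.range X)) = k)
    (Y Xs : Matrix (Fin n) (Fin n) 𝕜)
    (hY : Y ∉ Submodule.span 𝕜 (Set.range X))
    (happrox : IsSpectralApprox (Submodule.span 𝕜 (Set.range X)) Y Xs) :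
    maxMinVal (Submodule.span 𝕜 (Set.range X)) Y
        = minMaxVal (Submodule.span 𝕜 (Set.range X)) Y ↔
      (fun i : Fin (k + 1) => if i = 0 then ((specNorm (Y - Xs) ^ 2 : ℝ) : 𝕜) else 0) ∈
        kField (Fin.cons ((Y - Xs)ᴴ * Y) (fun i => (Y - Xs)ᴴ * X i)) ⊤ :=
  stmt13_general X Y Xs hY happrox
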